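/- There are no integers c, d, e with c ≥ 3, d ≥ 3 and e ≥ 3 such that cos(π/c)² + cos(π/d)² + cos(π/e)² = (5 + √5)/8. -/

import Mathlib

/-!
Since `cos (π / n) ^ 2` is `1 / 4` for `n = 3` and at least `cos (π / 4) ^ 2 = 1 / 2` for `n ≥ 4`,
a sum of three such terms is either `3 / 4` or at least `1`, whereas `1 < √5 < 3` puts
`(5 + √5) / 8` strictly between these values.
-/

open Real

lemma cos_sq_pi_div_le_cos_sq_pi_div {m x : ℝ} (hm : 2 ≤ m) (hmx : m ≤ x) :
    cos (π / m) ^ 2 ≤ cos (π / x) ^ 2 := by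
  have hm0 : 0 < m := by linarith
  have hx_le_m : π / x ≤ π / m := div_le_div_of_nonneg_left pi_pos.le hm0 hmx
  have hm_le_half : π / m ≤ π / 2 := div_le_div_of_nonneg_left pi_pos.le two_pos hm
  have hm_pos : 0 < π / m := div_pos pi_pos hm0
  have hcos_nonneg : 0 ≤ cos (π / m) :=
    cos_nonneg_of_neg_pi_div_two_le_of_le (by linarith) hm_le_half
  gcongr
  exact cos_le_cos_of_nonneg_of_le_pi (div_nonneg pi_pos.le (by linarith))
    (by linarith [pi_pos]) hx_le_m

lemma cos_sq_pi_div_three : cos (π / 3) ^ 2 = 1 / 4 := by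
  rw [cos_pi_div_three]
  norm_num

lemma cos_sq_pi_div_four : cos (π / 4) ^ 2 = 1 / 2 := by
  rw [cos_pi_div_four, div_pow, sq_sqrt zero_le_two]
  norm_num

lemma cos_sq_pi_div_intCast_eq_or_le {n : ℤ} (hn : 3 ≤ n) :
    cos (π / n) ^ 2 = 1 / 4 ∨ 1 / 2 ≤ cos (π / n) ^ 2 := by
  obtain rfl | h3n := hn.eq_or_lt
  · left
    exact_mod_cast cos_sq_pi_div_three
  · right
    rw [← cos_sq_pi_div_four]
    exact cos_sq_pi_div_le_cos_sq_pi_div (by norm_num) (by exact_mod_cast h3n)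

theorem yang_lee_three_term :
    ¬ ∃ c d e : ℤ, 3 ≤ c ∧ 3 ≤ d ∧ 3 ≤ e ∧
      Real.cos (π / (c : ℝ)) ^ 2 + Real.cos (π / (d : ℝ)) ^ 2 +
        Real.cos (π / (e : ℝ)) ^ 2 = (5 + Real.sqrt 5) / 8 := by
  rintro ⟨c, d, e, hc, hd, he, hsum⟩
  have one_lt_sqrt_five : 1 < √5 := (lt_sqrt zero_le_one).2 (by norm_num)
  have sqrt_five_lt_three : √5 < 3 := (sqrt_lt' three_pos).2 (by norm_num)
  rcases cos_sq_pi_div_intCast_eq_or_le hc with hc | hc <;>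
    rcases cos_sq_pi_div_intCast_eq_or_le hd with hd | hd <;>
    rcases cos_sq_pi_div_intCast_eq_or_le he with he | he <;>
    linarith
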